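/- Let G be a group containing a free subgroup F of rank 2 freely generated by elements x and y, and suppose N ≤ G is a subgroup with x ∈ N, y ∉ N, y^n ∉ N for all n > 0, and y N y^{-1} ⊆ N. Then N ∩ F is a nontrivial subgroup of the free group F, is conjugated into itself by y with no positive power of y in N ∩ F, and hence N ∩ F is not finitely generated. -/

import Mathlib

/-!
Write `xᵢ = yⁱ x y⁻ⁱ`. Every element of `N ∩ F` has exponent sum zero in `y`: if `w ∈ N` has
exponent sum `d`, then `w y⁻ᵈ` is a product of `xᵢ^±1`, so a large power of `y` conjugates it
into `⟨xᵢ : i ≥ 0⟩ ≤ N`; as that power also conjugates `w` into `N`, we get `yᵈ ∈ N`, so `d = 0`.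
Mapping `F` to `F(ℤ) ⋊ ℤ` by `x ↦ x₀` and `y ↦` the shift of the generators, elements of exponent
sum zero land in `F(ℤ)` and `xᵢ ↦ xᵢ`. A finitely generated subgroup of `F(ℤ)` involves only
finitely many generators, while the image of `N ∩ F` contains every `xᵢ` with `i ≥ 0`.
-/

open Filter Multiplicative

theorem Subgroup.FG.map {G G' : Type*} [Group G] [Group G'] {H : Subgroup G} (hH : H.FG)
    (f : G →* G') : (H.map f).FG := by
  rw [Subgroup.fg_iff_submonoid_fg] at hH ⊢
  exact hH.map f

theorem Subgroup.FG.comap_of_le_range {G G' : Type*} [Group G] [Group G'] {H : Subgroup G'}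
    (hH : H.FG) {f : G →* G'} (hf : Function.Injective f) (hle : H ≤ f.range) :
    (H.comap f).FG := by
  rw [← Subgroup.map_comap_eq_self hle, Subgroup.fg_iff_submonoid_fg] at hH
  rw [Subgroup.fg_iff_submonoid_fg]
  exact hH.map_injective f hf

namespace FreeGroup

variable {α : Type*}

theorem exists_finite_mem_closure_image_of (z : FreeGroup α) :
    ∃ S : Set α, S.Finite ∧ z ∈ Subgroup.closure (of '' S) := by
  induction z using FreeGroup.induction_on with
  | C1 => exact ⟨∅, Set.finite_empty, one_mem _⟩
  | of a => exact ⟨{a}, Set.finite_singleton a, Subgroup.subset_closure ⟨a, rfl, rfl⟩⟩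
  | inv_of a h =>
    obtain ⟨S, hS, h⟩ := h
    exact ⟨S, hS, inv_mem h⟩
  | mul u v hu hv =>
    obtain ⟨S, hS, hu⟩ := hu
    obtain ⟨T, hT, hv⟩ := hv
    exact ⟨S ∪ T, hS.union hT,
      mul_mem (Subgroup.closure_mono (Set.image_mono Set.subset_union_left) hu)
        (Subgroup.closure_mono (Set.image_mono Set.subset_union_right) hv)⟩

theorem of_mem_closure_image_of_iff {S : Set α} {a : α} :
    of a ∈ Subgroup.closure (of '' S) ↔ a ∈ S := by
  classical
  refine ⟨fun h => ?_, fun h => Subgroup.subset_closure ⟨a, h, rfl⟩⟩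
  by_contra ha
  let r : FreeGroup α →* FreeGroup α := lift fun b => if b ∈ S then of b else 1
  have hr : Subgroup.closure (of '' S) ≤ (MonoidHom.id _).eqLocus r := by
    rw [Subgroup.closure_le]
    rintro _ ⟨b, hb, rfl⟩
    change of b = r (of b)
    simp [r, hb]
  have : of a = r (of a) := hr h
  simp [r, ha] at this

theorem _root_.Subgroup.FG.finite_setOf_of_mem {H : Subgroup (FreeGroup α)} (hH : H.FG) :
    {a | of a ∈ H}.Finite := by
  obtain ⟨T, rfl, hT⟩ := (Subgroup.fg_iff H).1 hH
  choose S hS hmem using exists_finite_mem_closure_image_of (α := α)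
  refine (hT.biUnion fun t _ => hS t).subset fun a ha => ?_
  have : Subgroup.closure T ≤ Subgroup.closure (of '' ⋃ t ∈ T, S t) := by
    rw [Subgroup.closure_le]
    exact fun t ht =>
      Subgroup.closure_mono (Set.image_mono (Set.subset_biUnion_of_mem ht)) (hmem t)
  exact of_mem_closure_image_of_iff.1 (this ha)

end FreeGroup

namespace Subgroup

variable {G : Type*} [Group G] {N : Subgroup G} {y : G}

theorem eq_zero_of_zpow_mem (hy : ∀ n : ℕ, 0 < n → y ^ n ∉ N) {d : ℤ} (hd : y ^ d ∈ N) :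
    d = 0 := by
  have : y ^ d.natAbs ∈ N := by
    rcases Int.natAbs_eq d with h | h
    · rwa [h, zpow_natCast] at hd
    · rwa [h, zpow_neg, inv_mem_iff, zpow_natCast] at hd
  by_contra hd0
  exact hy _ (Int.natAbs_pos.2 hd0) this

theorem conj_pow_mem (hconj : ∀ g ∈ N, y * g * y⁻¹ ∈ N) (n : ℕ) {g : G} (hg : g ∈ N) :
    y ^ n * g * (y ^ n)⁻¹ ∈ N := by
  induction n with
  | zero => simpa using hg
  | succ n ih => simpa [pow_succ', mul_assoc] using hconj _ ih

variable (N y) in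
/-- This is `⋃ M, y⁻ᴹ N yᴹ` when `y N y⁻¹ ⊆ N`; taking the limit along `atTop` makes it a
subgroup normalized by `y` in general. -/
def eventuallyConj : Subgroup G where
  carrier := {g | ∀ᶠ M : ℤ in atTop, y ^ M * g * (y ^ M)⁻¹ ∈ N}
  one_mem' := by simp
  mul_mem' ha hb := (ha.and hb).mono fun _ h => by simpa [mul_assoc] using mul_mem h.1 h.2
  inv_mem' ha := ha.mono fun _ h => by simpa [mul_assoc] using inv_mem h

theorem le_eventuallyConj (hconj : ∀ g ∈ N, y * g * y⁻¹ ∈ N) : N ≤ N.eventuallyConj y := by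
  intro g hg
  filter_upwards [eventually_ge_atTop 0] with M hM
  lift M to ℕ using hM
  simpa using conj_pow_mem hconj M hg

theorem conj_zpow_mem_eventuallyConj (k : ℤ) {g : G} (hg : g ∈ N.eventuallyConj y) :
    y ^ k * g * (y ^ k)⁻¹ ∈ N.eventuallyConj y := by
  filter_upwards [(tendsto_atTop_add_const_right atTop k tendsto_id).eventually hg] with M hM
  simpa [zpow_add, mul_assoc] using hM

theorem zpow_mem_eventuallyConj_iff {d : ℤ} : y ^ d ∈ N.eventuallyConj y ↔ y ^ d ∈ N := by
  change (∀ᶠ M : ℤ in atTop, _) ↔ _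
  simp only [← zpow_add, ← zpow_neg, add_neg_cancel_comm, eventually_const]

end Subgroup

namespace FreeGroup

def exponentSumFalse : FreeGroup Bool →* Multiplicative ℤ :=
  lift fun b => if b then 1 else ofAdd 1

@[simp] theorem exponentSumFalse_of_true : exponentSumFalse (of true) = 1 := by
  simp [exponentSumFalse]

@[simp] theorem exponentSumFalse_of_false : exponentSumFalse (of false) = ofAdd 1 := by
  simp [exponentSumFalse]

section Lift

variable {G : Type*} [Group G] {x y : G}

theorem lift_mul_zpow_exponentSumFalse_inv_mem {Q : Subgroup G} (hx : x ∈ Q)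
    (hQ : ∀ k : ℤ, ∀ g ∈ Q, y ^ k * g * (y ^ k)⁻¹ ∈ Q) (w : FreeGroup Bool) :
    lift (fun b => if b then x else y) w * (y ^ (exponentSumFalse w).toAdd)⁻¹ ∈ Q := by
  induction w using FreeGroup.induction_on with
  | C1 => simp
  | of b => cases b <;> simp [hx]
  | inv_of b _ => cases b <;> simp [hx]
  | mul u v hu hv =>
    simpa [zpow_add, mul_assoc] using mul_mem hu (hQ (exponentSumFalse u).toAdd _ hv)

theorem exponentSumFalse_eq_one_of_lift_mem {N : Subgroup G} (hx : x ∈ N)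
    (hy : ∀ n : ℕ, 0 < n → y ^ n ∉ N) (hconj : ∀ g ∈ N, y * g * y⁻¹ ∈ N) {w : FreeGroup Bool}
    (hw : lift (fun b => if b then x else y) w ∈ N) : exponentSumFalse w = 1 := by
  have hyQ : y ^ (exponentSumFalse w).toAdd ∈ N.eventuallyConj y := by
    simpa using mul_mem (inv_mem (lift_mul_zpow_exponentSumFalse_inv_mem
      (Subgroup.le_eventuallyConj hconj hx)
      (fun k _ => Subgroup.conj_zpow_mem_eventuallyConj k) w))
      (Subgroup.le_eventuallyConj hconj hw)
  exact toAdd.injective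
    (Subgroup.eq_zero_of_zpow_mem hy (Subgroup.zpow_mem_eventuallyConj_iff.1 hyQ))

end Lift

def shift : MulAut (FreeGroup ℤ) := freeGroupCongr (Equiv.addRight 1)

theorem shift_pow_of (n : ℕ) (k : ℤ) : (shift ^ n) (of k) = of (k + n) := by
  induction n generalizing k with
  | zero => simp
  | succ n ih =>
    rw [pow_succ', MulAut.mul_apply, ih]
    simp [shift, add_assoc]

abbrev shiftAction : Multiplicative ℤ →* MulAut (FreeGroup ℤ) := zpowersHom _ shift

def toShiftSemidirect : FreeGroup Bool →* FreeGroup ℤ ⋊[shiftAction] Multiplicative ℤ :=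
  lift fun b => if b then SemidirectProduct.inl (of 0) else SemidirectProduct.inr (ofAdd 1)

theorem rightHom_toShiftSemidirect (w : FreeGroup Bool) :
    SemidirectProduct.rightHom (toShiftSemidirect w) = exponentSumFalse w := by
  rw [← MonoidHom.comp_apply]
  congr 1
  ext b
  cases b <;> simp [toShiftSemidirect]

theorem toShiftSemidirect_conj_pow (m : ℕ) :
    toShiftSemidirect (of false ^ m * of true * (of false ^ m)⁻¹) =
      SemidirectProduct.inl (of (m : ℤ)) := by
  simp only [toShiftSemidirect, _root_.map_mul, _root_.map_inv, _root_.map_pow, lift_apply_of,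
    Bool.false_eq_true, if_true, if_false]
  rw [← _root_.map_pow, ← _root_.map_inv, ← SemidirectProduct.inl_aut]
  simp [shift_pow_of]

theorem not_fg_of_le_ker_of_conj_pow_mem {K : Subgroup (FreeGroup Bool)}
    (hK : K ≤ exponentSumFalse.ker)
    (hmem : ∀ m : ℕ, of false ^ m * of true * (of false ^ m)⁻¹ ∈ K) :
    ¬ K.FG := by
  intro hFG
  have hL : ((K.map toShiftSemidirect).comap SemidirectProduct.inl).FG := by
    refine (hFG.map _).comap_of_le_range SemidirectProduct.inl_injective ?_
    rw [SemidirectProduct.range_inl_eq_ker_rightHom, Subgroup.map_le_iff_le_comap]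
    intro w hw
    simpa [rightHom_toShiftSemidirect] using hK hw
  refine (Set.infinite_range_of_injective Nat.cast_injective).mono ?_ hL.finite_setOf_of_mem
  rintro _ ⟨m, rfl⟩
  exact ⟨_, hmem m, toShiftSemidirect_conj_pow m⟩

end FreeGroup

theorem stmt_19_general {G : Type*} [Group G] (x y : G)
    (hfree : Function.Injective
      (FreeGroup.lift (fun b : Bool => if b then x else y) : FreeGroup Bool →* G))
    (N : Subgroup G) (hx : x ∈ N)
    (hy : ∀ n : ℕ, 0 < n → y ^ n ∉ N)
    (hconj : ∀ g ∈ N, y * g * y⁻¹ ∈ N) :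
    N ⊓ (FreeGroup.lift (fun b : Bool => if b then x else y) : FreeGroup Bool →* G).range ≠ ⊥ ∧
    (∀ g ∈ N ⊓ (FreeGroup.lift (fun b : Bool => if b then x else y) : FreeGroup Bool →* G).range,
      y * g * y⁻¹ ∈
        N ⊓ (FreeGroup.lift (fun b : Bool => if b then x else y) : FreeGroup Bool →* G).range) ∧
    (∀ n : ℕ, 0 < n → y ^ n ∉
      N ⊓ (FreeGroup.lift (fun b : Bool => if b then x else y) : FreeGroup Bool →* G).range) ∧
    ¬ (N ⊓ (FreeGroup.lift (fun b : Bool => if b then x else y) : FreeGroup Bool →* G).range).FG := by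
  set f : FreeGroup Bool →* G := FreeGroup.lift fun b : Bool => if b then x else y
  have hxf : x ∈ f.range := ⟨FreeGroup.of true, by simp [f]⟩
  have hyf : y ∈ f.range := ⟨FreeGroup.of false, by simp [f]⟩
  refine ⟨?_, fun g hg => ⟨hconj g hg.1, mul_mem (mul_mem hyf hg.2) (f.range.inv_mem hyf)⟩,
    fun n hn h => hy n hn h.1, fun hFG => ?_⟩
  · refine (Subgroup.ne_bot_iff_exists_ne_one).2 ⟨⟨x, hx, hxf⟩, fun h => ?_⟩
    exact FreeGroup.of_ne_one true (hfree (by simpa [f] using congrArg Subtype.val h))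
  · refine FreeGroup.not_fg_of_le_ker_of_conj_pow_mem (K := (N ⊓ f.range).comap f)
      (fun w hw => FreeGroup.exponentSumFalse_eq_one_of_lift_mem hx hy hconj hw.1)
      (fun m => ⟨?_, _, rfl⟩) (hFG.comap_of_le_range hfree inf_le_right)
    simpa [f] using Subgroup.conj_pow_mem hconj m hx

/-- if `F = ⟨x, y⟩` is free of rank 2 on `x, y`, `N ≤ G` contains `x`,
`y N y⁻¹ ⊆ N` and `y^n ∉ N` for all `n > 0`, then `N ∩ F` is nontrivial, conjugated
into itself by `y`, contains no positive power of `y`, and is not finitely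
generated. -/
theorem stmt_19 {G : Type*} [Group G] (x y : G)
    (hfree : Function.Injective
      (FreeGroup.lift (fun b : Bool => if b then x else y) : FreeGroup Bool →* G))
    (N : Subgroup G) (hx : x ∈ N) (hyN : y ∉ N)
    (hy : ∀ n : ℕ, 0 < n → y ^ n ∉ N)
    (hconj : ∀ g ∈ N, y * g * y⁻¹ ∈ N) :
    N ⊓ (FreeGroup.lift (fun b : Bool => if b then x else y) : FreeGroup Bool →* G).range ≠ ⊥ ∧
    (∀ g ∈ N ⊓ (FreeGroup.lift (fun b : Bool => if b then x else y) : FreeGroup Bool →* G).range,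
      y * g * y⁻¹ ∈
        N ⊓ (FreeGroup.lift (fun b : Bool => if b then x else y) : FreeGroup Bool →* G).range) ∧
    (∀ n : ℕ, 0 < n → y ^ n ∉
      N ⊓ (FreeGroup.lift (fun b : Bool => if b then x else y) : FreeGroup Bool →* G).range) ∧
    ¬ (N ⊓ (FreeGroup.lift (fun b : Bool => if b then x else y) : FreeGroup Bool →* G).range).FG :=
  stmt_19_general x y hfree N hx hy hconj
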